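/- Let W be a finite group acting on V, and suppose H ≤ W is a subgroup such that every element of H has a nonzero fixed vector in V (i.e., det(1−h on V) = 0 for all h ∈ H). Then any character induced from H to W lies in the radical of the elliptic pairing ⟨·,·⟩^el_W. -/

import Mathlib

open scoped BigOperators

/-- The elliptic pairing on `ℂ`-valued functions on `W`, relative to the action of `W` on `V`
via `ρ`. -/
noncomputable def ellipticPairing (W : Type*) [Group W] [Fintype W]
    {V : Type*} [AddCommGroup V] [Module ℂ V] [FiniteDimensional ℂ V]
    (ρ : Representation ℂ W V) (f g : W → ℂ) : ℂ :=
  (Fintype.card W : ℂ)⁻¹ * ∑ w : W, (starRingEnd ℂ) (f w) * g w *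
    LinearMap.det (LinearMap.id - ρ w)

/-- The character of `W` induced from a function `χ` on a subgroup `H`, given by the usual
induced character formula `Ind χ(w) = (1/|H|) ∑_{x ∈ W, x⁻¹wx ∈ H} χ(x⁻¹wx)`. -/
noncomputable def inducedChar {W : Type*} [Group W] [Fintype W]
    (H : Subgroup W) [DecidablePred (· ∈ H)] (χ : W → ℂ) : W → ℂ :=
  fun w => (Nat.card H : ℂ)⁻¹ * ∑ x : W, if x⁻¹ * w * x ∈ H then χ (x⁻¹ * w * x) else 0

theorem Representation.det_id_sub_conj {k G V : Type*} [CommRing k] [Group G] [AddCommGroup V]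
    [Module k V] (ρ : Representation k G V) (g w : G) :
    LinearMap.det (LinearMap.id - ρ (g⁻¹ * w * g)) = LinearMap.det (LinearMap.id - ρ w) := by
  have hconj : LinearMap.id - ρ (g⁻¹ * w * g) = ρ g⁻¹ * (LinearMap.id - ρ w) * ρ g := by
    rw [mul_sub, sub_mul, ← Module.End.one_eq_id, mul_one, ← map_mul, ← map_mul, ← map_mul,
      inv_mul_cancel, map_one]
  rw [hconj, map_mul, map_mul, mul_right_comm, ← map_mul LinearMap.det, ← map_mul ρ,
    inv_mul_cancel, map_one, map_one, one_mul]

theorem inducedChar_eq_zero_of_forall_conj_not_mem {W : Type*} [Group W] [Fintype W]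
    (H : Subgroup W) [DecidablePred (· ∈ H)] (χ : W → ℂ) {w : W}
    (hw : ∀ x : W, x⁻¹ * w * x ∉ H) : inducedChar H χ w = 0 := by
  simp only [inducedChar, if_neg (hw _), Finset.sum_const_zero, mul_zero]

theorem ellipticPairing_eq_zero_of_forall_det_ne_zero (W : Type*) [Group W] [Fintype W]
    {V : Type*} [AddCommGroup V] [Module ℂ V] [FiniteDimensional ℂ V]
    (ρ : Representation ℂ W V) {f : W → ℂ} (g : W → ℂ)
    (hf : ∀ w, LinearMap.det (LinearMap.id - ρ w) ≠ 0 → f w = 0) :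
    ellipticPairing W ρ f g = 0 := by
  refine mul_eq_zero_of_right _ (Finset.sum_eq_zero fun w _ => ?_)
  by_cases hw : LinearMap.det (LinearMap.id - ρ w) = 0
  · rw [hw, mul_zero]
  · rw [hf w hw, map_zero, zero_mul, zero_mul]

/-- If every element of the subgroup `H ≤ W` has a nonzero fixed vector in `V`
(i.e. `det(1 - h) = 0` on `V` for all `h ∈ H`), then any character induced from `H`
lies in the radical of the elliptic pairing. -/
theorem inducedChar_mem_radical_of_no_elliptic_elements
    (W : Type*) [Group W] [Fintype W]
    (V : Type*) [AddCommGroup V] [Module ℂ V] [FiniteDimensional ℂ V]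
    (ρ : Representation ℂ W V)
    (H : Subgroup W) [DecidablePred (· ∈ H)]
    (hH : ∀ h ∈ H, LinearMap.det (LinearMap.id - ρ h) = 0)
    (χ : W → ℂ) (μ : W → ℂ) :
    ellipticPairing W ρ (inducedChar H χ) μ = 0 := by
  refine ellipticPairing_eq_zero_of_forall_det_ne_zero W ρ μ fun w hw => ?_
  refine inducedChar_eq_zero_of_forall_conj_not_mem H χ fun x hx => hw ?_
  rw [← ρ.det_id_sub_conj x w]
  exact hH _ hx
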